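/- arXiv:2310.19191 — 2 statements merged into one kernel-verified Lean document; each statement's English description precedes it below -/
import Mathlib

section
/- Let L_δ be a family of bounded operators on Banach spaces B_s ⊆ B_w with ‖(L_δ − L₀)f‖_w ≤ Cδ‖f‖_s, and suppose each v_δ ∈ B_s satisfies L_δ v_δ = λ_δ v_δ with λ_δ → λ₀, ‖v_δ − v₀‖_s → 0, and (v_δ − v₀)/δ converging in B_w, and (L_δ − L₀)v₀/δ converging in B_w. Then the map δ ↦ λ_δ is differentiable at δ = 0. -/
open Filter Topology

/-! Subtracting the eigenvalue equations at `δ` and at `0` and dividing by `δ` expresses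
`((λ_δ - λ₀)/δ) • v₀` through the difference quotients of `v` and of `L` at `v₀`, plus the term
`(L_δ - L₀)((v_δ - v₀)/δ)`, which is `O(‖v_δ - v₀‖_s)` by the perturbation bound. Hence
`((λ_δ - λ₀)/δ) • v₀` converges in `B_w`, and pairing with a dual vector of `v₀ ≠ 0` shows that
the scalar difference quotient converges. -/

theorem exists_tendsto_of_tendsto_smul_const {𝕜 E α : Type*} [RCLike 𝕜] [NormedAddCommGroup E]
    [NormedSpace 𝕜 E] {l : Filter α} {c : α → 𝕜} {x y : E} (hx : x ≠ 0)
    (h : Tendsto (fun a => c a • x) l (𝓝 y)) : ∃ c₀, Tendsto c l (𝓝 c₀) := by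
  obtain ⟨φ, -, hφx⟩ := exists_dual_vector 𝕜 x (norm_ne_zero_iff.mpr hx)
  have hφx₀ : φ x ≠ 0 := by simpa [hφx] using hx
  refine ⟨φ y / φ x, ((φ.continuous.tendsto y).comp h).div_const (φ x) |>.congr fun a => ?_⟩
  simp [hφx₀]

theorem smul_sub_div_eq_of_eigen {𝕜 E F : Type*} [Field 𝕜] [AddCommGroup E] [Module 𝕜 E]
    [FunLike F E E] [LinearMapClass F 𝕜 E E] {L L₀ : F} {v v₀ : E} {μ μ₀ : 𝕜} (t : 𝕜)
    (h : L v = μ • v) (h₀ : L₀ v₀ = μ₀ • v₀) :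
    ((μ - μ₀) / t) • v₀ = L₀ (t⁻¹ • (v - v₀)) + (L (t⁻¹ • (v - v₀)) - L₀ (t⁻¹ • (v - v₀)))
      + t⁻¹ • (L v₀ - L₀ v₀) - μ • t⁻¹ • (v - v₀) := by
  simp only [map_smul, map_sub, h, h₀, div_eq_mul_inv]
  module

theorem tendsto_perturbation_apply_diffQuot {𝕜 Bs Bw : Type*} [RCLike 𝕜]
    [NormedAddCommGroup Bs] [NormedSpace 𝕜 Bs] [NormedAddCommGroup Bw] [NormedSpace 𝕜 Bw]
    {l : Filter ℝ} (ι : Bs →L[𝕜] Bw) (L : ℝ → Bw →L[𝕜] Bw) (v : ℝ → Bs) (v₀ : Bs) (C : ℝ)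
    (hpert : ∀ᶠ δ in l, 0 < δ ∧ ∀ f : Bs, ‖L δ (ι f) - L 0 (ι f)‖ ≤ C * δ * ‖f‖)
    (hv : Tendsto (fun δ => ‖v δ - v₀‖) l (𝓝 0)) :
    Tendsto (fun δ : ℝ => L δ ((δ : 𝕜)⁻¹ • (ι (v δ) - ι v₀))
      - L 0 ((δ : 𝕜)⁻¹ • (ι (v δ) - ι v₀))) l (𝓝 0) := by
  refine squeeze_zero_norm' ?_ (by simpa using hv.const_mul C)
  filter_upwards [hpert] with δ ⟨hδ, hbound⟩
  have hnorm_inv : ‖(δ : 𝕜)⁻¹‖ = δ⁻¹ := by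
    rw [norm_inv, RCLike.norm_ofReal, abs_of_pos hδ]
  calc ‖L δ ((δ : 𝕜)⁻¹ • (ι (v δ) - ι v₀)) - L 0 ((δ : 𝕜)⁻¹ • (ι (v δ) - ι v₀))‖
      = ‖L δ (ι ((δ : 𝕜)⁻¹ • (v δ - v₀))) - L 0 (ι ((δ : 𝕜)⁻¹ • (v δ - v₀)))‖ := by
        simp only [map_smul, map_sub]
    _ ≤ C * δ * ‖(δ : 𝕜)⁻¹ • (v δ - v₀)‖ := hbound _
    _ = C * ‖v δ - v₀‖ := by
        rw [norm_smul, hnorm_inv]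
        field_simp

theorem eigenvalue_differentiable_general
    {Bs Bw : Type*} [NormedAddCommGroup Bs] [NormedSpace ℂ Bs]
    [NormedAddCommGroup Bw] [NormedSpace ℂ Bw]
    (ι : Bs →L[ℂ] Bw) (hinj : Function.Injective ι)
    (δbar C : ℝ) (hδbar : 0 < δbar)
    (Lw : ℝ → Bw →L[ℂ] Bw)
    (hpert : ∀ δ ∈ Set.Ico (0:ℝ) δbar, ∀ f : Bs,
      ‖Lw δ (ι f) - Lw 0 (ι f)‖ ≤ C * δ * ‖f‖)
    (v : ℝ → Bs) (lam : ℝ → ℂ) (hv0 : v 0 ≠ 0)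
    (heig : ∀ δ ∈ Set.Ico (0:ℝ) δbar, Lw δ (ι (v δ)) = lam δ • ι (v δ))
    (hlam : Tendsto lam (𝓝[Set.Ioo 0 δbar] 0) (𝓝 (lam 0)))
    (hvconv : Tendsto (fun δ => ‖v δ - v 0‖) (𝓝[Set.Ioo 0 δbar] 0) (𝓝 0))
    (hu : ∃ u : Bw, Tendsto (fun δ : ℝ => ((δ : ℂ))⁻¹ • (ι (v δ) - ι (v 0)))
      (𝓝[Set.Ioo 0 δbar] 0) (𝓝 u))
    (hz : ∃ z : Bw, Tendsto (fun δ : ℝ => ((δ : ℂ))⁻¹ • (Lw δ (ι (v 0)) - Lw 0 (ι (v 0))))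
      (𝓝[Set.Ioo 0 δbar] 0) (𝓝 z)) :
    ∃ c : ℂ, Tendsto (fun δ : ℝ => (lam δ - lam 0) / (δ : ℂ))
      (𝓝[Set.Ioo 0 δbar] 0) (𝓝 c) := by
  obtain ⟨u, hu⟩ := hu
  obtain ⟨z, hz⟩ := hz
  have hmem : ∀ᶠ δ in 𝓝[Set.Ioo 0 δbar] 0, δ ∈ Set.Ioo 0 δbar := eventually_mem_nhdsWithin
  have hsmall := tendsto_perturbation_apply_diffQuot ι Lw v (v 0) C
    (hmem.mono fun δ hδ => ⟨hδ.1, hpert δ ⟨hδ.1.le, hδ.2⟩⟩) hvconv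
  have hlim : Tendsto (fun δ : ℝ => ((lam δ - lam 0) / (δ : ℂ)) • ι (v 0))
      (𝓝[Set.Ioo 0 δbar] 0) (𝓝 (Lw 0 u + 0 + z - lam 0 • u)) := by
    refine (((((Lw 0).continuous.tendsto u).comp hu).add hsmall).add hz |>.sub
      (hlam.smul hu)).congr' ?_
    filter_upwards [hmem] with δ hδ
    exact (smul_sub_div_eq_of_eigen _ (heig δ ⟨hδ.1.le, hδ.2⟩) (heig 0 ⟨le_rfl, hδbar⟩)).symm
  exact exists_tendsto_of_tendsto_smul_const ((map_ne_zero_iff ι hinj).mpr hv0) hlim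

/-- Differentiability of a simple eigenvalue family: if `‖(L_δ - L₀)f‖_w ≤ Cδ‖f‖_s`,
the eigenvectors `v_δ ∈ B_s` (with eigenvalues `λ_δ → λ₀`) converge in `B_s`,
`(v_δ - v₀)/δ` converges in `B_w`, and `(L_δ - L₀)v₀/δ` converges in `B_w`, then
`δ ↦ λ_δ` is differentiable at `δ = 0` (from the right). -/
theorem eigenvalue_differentiable
    {Bs Bw : Type*} [NormedAddCommGroup Bs] [NormedSpace ℂ Bs]
    [NormedAddCommGroup Bw] [NormedSpace ℂ Bw]
    (ι : Bs →L[ℂ] Bw) (hinj : Function.Injective ι) (hnorm : ∀ f : Bs, ‖ι f‖ ≤ ‖f‖)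
    (δbar C : ℝ) (hδbar : 0 < δbar)
    (Lw : ℝ → Bw →L[ℂ] Bw)
    (hpert : ∀ δ ∈ Set.Ico (0:ℝ) δbar, ∀ f : Bs,
      ‖Lw δ (ι f) - Lw 0 (ι f)‖ ≤ C * δ * ‖f‖)
    (v : ℝ → Bs) (lam : ℝ → ℂ) (hv0 : v 0 ≠ 0)
    (heig : ∀ δ ∈ Set.Ico (0:ℝ) δbar, Lw δ (ι (v δ)) = lam δ • ι (v δ))
    (hlam : Tendsto lam (𝓝[Set.Ioo 0 δbar] 0) (𝓝 (lam 0)))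
    (hvconv : Tendsto (fun δ => ‖v δ - v 0‖) (𝓝[Set.Ioo 0 δbar] 0) (𝓝 0))
    (hu : ∃ u : Bw, Tendsto (fun δ : ℝ => ((δ : ℂ))⁻¹ • (ι (v δ) - ι (v 0)))
      (𝓝[Set.Ioo 0 δbar] 0) (𝓝 u))
    (hz : ∃ z : Bw, Tendsto (fun δ : ℝ => ((δ : ℂ))⁻¹ • (Lw δ (ι (v 0)) - Lw 0 (ι (v 0))))
      (𝓝[Set.Ioo 0 δbar] 0) (𝓝 z)) :
    ∃ c : ℂ, Tendsto (fun δ : ℝ => (lam δ - lam 0) / (δ : ℂ))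
      (𝓝[Set.Ioo 0 δbar] 0) (𝓝 c) :=
  eigenvalue_differentiable_general ι hinj δbar C hδbar Lw hpert v lam hv0 heig hlam hvconv hu hz
end

section
/- If T_δ(x) = T₀(x) + δ Ṫ(x) + O_{C^3}(δ²) is a family of C^3 expanding maps of the circle and y_i^δ(x) denotes the i-th inverse branch of T_δ evaluated at x, then y_i^δ(x) = y_i^0(x) − δ Ṫ(y_i^0(x))/T₀'(y_i^0(x)) + O_{C^1}(δ²), where the error term F_i(δ,·) satisfies sup_{δ∈(0,δ̄)} ‖F_i(δ,·)‖_{C^1}/δ² < ∞. -/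
/-!
Fix `x` and put `a = y₀ x`, `b = y_δ x`, so that `T₀ a = T_δ b`. Writing
`T_δ = T₀ + δ Ṫ + E_δ`, `T₀' ≥ 1` gives `|b - a| ≤ |T₀ b - T_δ b| = O(δ)`, and a second-order
Taylor expansion of `T₀` at `a` then gives `T₀'(a) (b - a) + δ Ṫ(a) = O(δ²)`. For the
derivative, `y_δ' = 1 / T_δ'(b)` and `1/q - 1/p = -(q - p)/p² + O((q - p)²)`, where
`q - p = T_δ'(b) - T₀'(a)` is expanded to first order in the same way. The constants are
uniform in `x` and `δ` because the derivatives of `T₀` and `Ṫ` that occur are continuous and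
`1`-periodic, hence bounded.
-/

/-- The `C^k` norm over one period `[0,1]` of a function on `ℝ`. -/
noncomputable def CnormIcc (k : ℕ) (f : ℝ → ℝ) : ℝ :=
  ∑ j ∈ Finset.range (k + 1), ⨆ x : Set.Icc (0:ℝ) 1, |iteratedDeriv j f x.1|

open Set Function

section Periodic

variable {𝕜 F : Type*} [NontriviallyNormedField 𝕜] [NormedAddCommGroup F] [NormedSpace 𝕜 F]
  {f : 𝕜 → F} {c : 𝕜}

theorem periodic_deriv_of_map_add_eq {k : F} (h : ∀ x, f (x + c) = f x + k) :
    Periodic (deriv f) c := fun x => by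
  rw [← deriv_comp_add_const, funext h, deriv_add_const]

theorem Function.Periodic.deriv (h : Periodic f c) : Periodic (deriv f) c :=
  periodic_deriv_of_map_add_eq (k := 0) fun x => by rw [h x, add_zero]

theorem Function.Periodic.iterate_deriv (h : Periodic f c) (n : ℕ) :
    Periodic (_root_.deriv^[n] f) c := by
  induction n with
  | zero => exact h
  | succ n ih => rw [iterate_succ_apply']; exact ih.deriv

end Periodic

theorem Function.Periodic.exists_abs_iterate_deriv_le {f : ℝ → ℝ} {c : ℝ} {n k : ℕ}
    (h : Periodic f c) (hc : c ≠ 0) (hf : ContDiff ℝ n f) (hk : k ≤ n) :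
    ∃ K, ∀ x, |_root_.deriv^[k] f x| ≤ K := by
  have hcont : Continuous (_root_.deriv^[k] f) :=
    iteratedDeriv_eq_iterate (f := f) ▸ hf.continuous_iteratedDeriv k (by exact_mod_cast hk)
  obtain ⟨K, hK⟩ := isBounded_iff_forall_norm_le.mp
    ((h.iterate_deriv k).isBounded_of_continuous hc hcont)
  exact ⟨K, fun x => hK _ (mem_range_self x)⟩

theorem CnormIcc_nonneg (k : ℕ) (f : ℝ → ℝ) : 0 ≤ CnormIcc k f :=
  Finset.sum_nonneg fun _ _ => Real.iSup_nonneg fun _ => abs_nonneg _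

theorem abs_iteratedDeriv_le_CnormIcc {k j : ℕ} {f : ℝ → ℝ} (hf : ContDiff ℝ j f)
    (hper : Periodic f 1) (hj : j ≤ k) (x : ℝ) : |iteratedDeriv j f x| ≤ CnormIcc k f := by
  have hcont : Continuous (iteratedDeriv j f) := hf.continuous_iteratedDeriv j le_rfl
  obtain ⟨t, ht, hxt⟩ := (iteratedDeriv_eq_iterate (f := f) ▸ hper.iterate_deriv j :
    Periodic (iteratedDeriv j f) 1).exists_mem_Ico₀ one_pos x
  rw [hxt]
  calc |iteratedDeriv j f t| ≤ ⨆ s : Icc (0:ℝ) 1, |iteratedDeriv j f s| :=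
        le_ciSup (f := fun s : Icc (0:ℝ) 1 => |iteratedDeriv j f s|)
          (isCompact_range (hcont.comp continuous_subtype_val).abs).bddAbove
          ⟨t, Ico_subset_Icc_self ht⟩
    _ ≤ CnormIcc k f :=
        Finset.single_le_sum (f := fun j => ⨆ s : Icc (0:ℝ) 1, |iteratedDeriv j f s|)
          (fun _ _ => Real.iSup_nonneg fun _ => abs_nonneg _)
          (Finset.mem_range.2 (Nat.lt_succ_of_le hj))

theorem CnormIcc_one_le {f : ℝ → ℝ} {A B : ℝ} (h₀ : ∀ x ∈ Icc (0:ℝ) 1, |f x| ≤ A)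
    (h₁ : ∀ x ∈ Icc (0:ℝ) 1, |deriv f x| ≤ B) : CnormIcc 1 f ≤ A + B := by
  have : Nonempty (Icc (0:ℝ) 1) := ⟨⟨0, left_mem_Icc.2 zero_le_one⟩⟩
  simp only [CnormIcc, Finset.sum_range_succ, Finset.sum_range_zero, zero_add,
    iteratedDeriv_zero, iteratedDeriv_one]
  exact add_le_add (ciSup_le fun x => h₀ x x.2) (ciSup_le fun x => h₁ x x.2)

theorem abs_sub_le_of_abs_deriv_le {f : ℝ → ℝ} (hf : Differentiable ℝ f) {C : ℝ}
    (h : ∀ t, |deriv f t| ≤ C) (u v : ℝ) : |f u - f v| ≤ C * |u - v| := by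
  simpa using convex_univ.norm_image_sub_le_of_norm_deriv_le (fun t _ => hf t) (fun t _ => h t)
    (mem_univ v) (mem_univ u)

theorem abs_sub_sub_deriv_mul_le {f : ℝ → ℝ} (hf : Differentiable ℝ f)
    (hf' : Differentiable ℝ (deriv f)) {M : ℝ} (h : ∀ t, |deriv (deriv f) t| ≤ M) (u v : ℝ) :
    |f u - f v - deriv f v * (u - v)| ≤ M * (u - v) ^ 2 := by
  have hg : ∀ t, HasDerivAt (fun s => f s - deriv f v * s) (deriv f t - deriv f v) t :=
    fun t => by
    have := (hf t).hasDerivAt.sub ((hasDerivAt_id' t).const_mul (deriv f v))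
    rwa [mul_one] at this
  have hbound : ∀ t ∈ uIcc v u, ‖deriv (fun s => f s - deriv f v * s) t‖ ≤ M * |u - v| :=
    fun t ht => by
      rw [(hg t).deriv, Real.norm_eq_abs]
      calc |deriv f t - deriv f v| ≤ M * |t - v| := abs_sub_le_of_abs_deriv_le hf' h t v
        _ ≤ M * |u - v| :=
          mul_le_mul_of_nonneg_left (abs_sub_left_of_mem_uIcc ht) ((abs_nonneg _).trans (h 0))
  have := (convex_uIcc v u).norm_image_sub_le_of_norm_deriv_le
    (fun t _ => (hg t).differentiableAt) hbound left_mem_uIcc right_mem_uIcc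
  rw [Real.norm_eq_abs] at this
  calc |f u - f v - deriv f v * (u - v)| = |f u - deriv f v * u - (f v - deriv f v * v)| := by
        ring_nf
    _ ≤ M * |u - v| * |u - v| := this
    _ = M * (u - v) ^ 2 := by rw [mul_assoc, ← abs_mul, ← sq, abs_of_nonneg (sq_nonneg _)]

theorem mul_abs_sub_le_abs_sub_of_le_deriv {f : ℝ → ℝ} (hf : Differentiable ℝ f) {C : ℝ}
    (h : ∀ t, C ≤ deriv f t) (u v : ℝ) : C * |u - v| ≤ |f u - f v| := by
  rcases le_total v u with huv | huv
  · rw [abs_of_nonneg (sub_nonneg.2 huv)]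
    exact (mul_sub_le_image_sub_of_le_deriv hf h huv).trans (le_abs_self _)
  · rw [abs_sub_comm, abs_of_nonneg (sub_nonneg.2 huv), abs_sub_comm]
    exact (mul_sub_le_image_sub_of_le_deriv hf h huv).trans (le_abs_self _)

theorem hasDerivAt_of_rightInverse {T y : ℝ → ℝ} {x : ℝ} (hT : DifferentiableAt ℝ T (y x))
    (hy : DifferentiableAt ℝ y x) (hTy : ∀ s, T (y s) = s) :
    HasDerivAt y (deriv T (y x))⁻¹ x := by
  have hcomp := hT.hasDerivAt.comp x hy.hasDerivAt
  rw [show T ∘ y = id from funext hTy] at hcomp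
  rw [← eq_inv_of_mul_eq_one_right ((hasDerivAt_id x).unique hcomp).symm]
  exact hy.hasDerivAt

theorem abs_inv_sub_inv_add_div_sq_le {p q g : ℝ} (hp : 1 ≤ p) (hq : 1 ≤ q) :
    |q⁻¹ - p⁻¹ + g / p ^ 2| ≤ (q - p) ^ 2 + |q - p - g| := by
  have hp0 : 0 < p := by linarith
  have hq0 : 0 < q := by linarith
  have hid : q⁻¹ - p⁻¹ + g / p ^ 2 = (q - p) ^ 2 / (p ^ 2 * q) - (q - p - g) / p ^ 2 := by
    field_simp; ring
  have hp2 : 1 ≤ p ^ 2 := one_le_pow₀ hp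
  rw [hid]
  refine (abs_sub _ _).trans (add_le_add ?_ ?_)
  · rw [abs_of_nonneg (div_nonneg (sq_nonneg _) (by nlinarith))]
    exact div_le_self (sq_nonneg _) (by nlinarith)
  · rw [abs_div, abs_of_pos (by positivity : (0:ℝ) < p ^ 2)]
    exact div_le_self (abs_nonneg _) hp2

section Perturbation

variable {T₀ T Tdot : ℝ → ℝ} {K₀ K₁ K₂ M₂ M₃ δ ε a b : ℝ}

theorem abs_sub_le_of_apply_eq (hT₀ : Differentiable ℝ T₀) (hexp : ∀ t, 1 ≤ deriv T₀ t)
    (hK₀ : ∀ t, |Tdot t| ≤ K₀) (hE : ∀ t, |T t - T₀ t - δ * Tdot t| ≤ ε) (hδ : 0 ≤ δ)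
    (hab : T b = T₀ a) : |b - a| ≤ δ * K₀ + ε := by
  have hsplit : T₀ b - T₀ a = -(T b - T₀ b - δ * Tdot b) - δ * Tdot b := by rw [hab]; ring
  calc |b - a| = 1 * |b - a| := (one_mul _).symm
    _ ≤ |T₀ b - T₀ a| := mul_abs_sub_le_abs_sub_of_le_deriv hT₀ hexp b a
    _ ≤ ε + δ * K₀ := by
      rw [hsplit]
      refine (abs_sub _ _).trans (add_le_add (by rw [abs_neg]; exact hE b) ?_)
      rw [abs_mul, abs_of_nonneg hδ]
      exact mul_le_mul_of_nonneg_left (hK₀ b) hδ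
    _ = δ * K₀ + ε := add_comm _ _

theorem abs_sub_sub_div_le_of_apply_eq (hT₀ : Differentiable ℝ T₀)
    (hT₀' : Differentiable ℝ (deriv T₀)) (hexp : ∀ t, 1 ≤ deriv T₀ t)
    (hM₂ : ∀ t, |deriv (deriv T₀) t| ≤ M₂) (hTdot : Differentiable ℝ Tdot)
    (hK₁ : ∀ t, |deriv Tdot t| ≤ K₁) (hE : ∀ t, |T t - T₀ t - δ * Tdot t| ≤ ε) (hδ : 0 ≤ δ)
    (hab : T b = T₀ a) :
    |b - (a - δ * Tdot a / deriv T₀ a)| ≤ M₂ * (b - a) ^ 2 + δ * K₁ * |b - a| + ε := by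
  have hp : 1 ≤ deriv T₀ a := hexp a
  have hsplit : deriv T₀ a * (b - (a - δ * Tdot a / deriv T₀ a))
      = -(T₀ b - T₀ a - deriv T₀ a * (b - a)) - δ * (Tdot b - Tdot a)
        - (T b - T₀ b - δ * Tdot b) := by
    rw [hab]; field_simp; ring
  have hTdot_sub : |δ * (Tdot b - Tdot a)| ≤ δ * K₁ * |b - a| := by
    rw [abs_mul, abs_of_nonneg hδ, mul_assoc]
    exact mul_le_mul_of_nonneg_left (abs_sub_le_of_abs_deriv_le hTdot hK₁ b a) hδ
  calc |b - (a - δ * Tdot a / deriv T₀ a)|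
      ≤ deriv T₀ a * |b - (a - δ * Tdot a / deriv T₀ a)| :=
        le_mul_of_one_le_left (abs_nonneg _) hp
    _ = |deriv T₀ a * (b - (a - δ * Tdot a / deriv T₀ a))| := by
      rw [abs_mul, abs_of_pos (by linarith : 0 < deriv T₀ a)]
    _ ≤ M₂ * (b - a) ^ 2 + δ * K₁ * |b - a| + ε := by
      rw [hsplit]
      refine (abs_sub _ _).trans
        (add_le_add ((abs_sub _ _).trans (add_le_add ?_ hTdot_sub)) (hE b))
      rw [abs_neg]
      exact abs_sub_sub_deriv_mul_le hT₀ hT₀' hM₂ b a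

theorem abs_deriv_sub_deriv_le (hT₀' : Differentiable ℝ (deriv T₀))
    (hM₂ : ∀ t, |deriv (deriv T₀) t| ≤ M₂) (hK₁ : ∀ t, |deriv Tdot t| ≤ K₁)
    (hE' : ∀ t, |deriv T t - deriv T₀ t - δ * deriv Tdot t| ≤ ε) (hδ : 0 ≤ δ) :
    |deriv T b - deriv T₀ a| ≤ M₂ * |b - a| + δ * K₁ + ε := by
  have hsplit : deriv T b - deriv T₀ a
      = (deriv T₀ b - deriv T₀ a) + δ * deriv Tdot b
        + (deriv T b - deriv T₀ b - δ * deriv Tdot b) := by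
    ring
  rw [hsplit]
  refine (abs_add_le _ _).trans (add_le_add ((abs_add_le _ _).trans (add_le_add
    (abs_sub_le_of_abs_deriv_le hT₀' hM₂ b a) ?_)) (hE' b))
  rw [abs_mul, abs_of_nonneg hδ]
  exact mul_le_mul_of_nonneg_left (hK₁ b) hδ

theorem abs_deriv_sub_deriv_sub_le (hT₀' : Differentiable ℝ (deriv T₀))
    (hT₀'' : Differentiable ℝ (deriv (deriv T₀))) (hM₂ : ∀ t, |deriv (deriv T₀) t| ≤ M₂)
    (hM₃ : ∀ t, |deriv (deriv (deriv T₀)) t| ≤ M₃) (hTdot' : Differentiable ℝ (deriv Tdot))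
    (hK₂ : ∀ t, |deriv (deriv Tdot) t| ≤ K₂)
    (hE' : ∀ t, |deriv T t - deriv T₀ t - δ * deriv Tdot t| ≤ ε) (hδ : 0 ≤ δ) :
    |deriv T b - deriv T₀ a - δ * (deriv Tdot a - deriv (deriv T₀) a * Tdot a / deriv T₀ a)|
      ≤ M₃ * (b - a) ^ 2 + M₂ * |b - (a - δ * Tdot a / deriv T₀ a)| + δ * K₂ * |b - a| + ε := by
  have hsplit :
      deriv T b - deriv T₀ a - δ * (deriv Tdot a - deriv (deriv T₀) a * Tdot a / deriv T₀ a)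
        = (deriv T₀ b - deriv T₀ a - deriv (deriv T₀) a * (b - a))
        + deriv (deriv T₀) a * (b - (a - δ * Tdot a / deriv T₀ a))
        + δ * (deriv Tdot b - deriv Tdot a)
        + (deriv T b - deriv T₀ b - δ * deriv Tdot b) := by
    ring
  have hTdot_sub : |δ * (deriv Tdot b - deriv Tdot a)| ≤ δ * K₂ * |b - a| := by
    rw [abs_mul, abs_of_nonneg hδ, mul_assoc]
    exact mul_le_mul_of_nonneg_left (abs_sub_le_of_abs_deriv_le hTdot' hK₂ b a) hδ
  rw [hsplit]
  refine (abs_add_le _ _).trans (add_le_add ((abs_add_le _ _).trans (add_le_add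
    ((abs_add_le _ _).trans (add_le_add (abs_sub_sub_deriv_mul_le hT₀' hT₀'' hM₃ b a) ?_))
    hTdot_sub)) (hE' b))
  rw [abs_mul]
  exact mul_le_mul_of_nonneg_right (hM₂ a) (abs_nonneg _)

end Perturbation

theorem hasDerivAt_inverse_sub_expansion {T₀ T Tdot y₀ y : ℝ → ℝ} {δ x : ℝ}
    (hT₀ : Differentiable ℝ T₀) (hT₀' : Differentiable ℝ (deriv T₀)) (hT : Differentiable ℝ T)
    (hTdot : Differentiable ℝ Tdot) (hy₀ : Differentiable ℝ y₀) (hy : Differentiable ℝ y)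
    (hT₀y₀ : ∀ s, T₀ (y₀ s) = s) (hTy : ∀ s, T (y s) = s) (hp : deriv T₀ (y₀ x) ≠ 0) :
    HasDerivAt (fun s => y s - (y₀ s - δ * Tdot (y₀ s) / deriv T₀ (y₀ s)))
      ((deriv T (y x))⁻¹ - (deriv T₀ (y₀ x))⁻¹
        + δ * (deriv Tdot (y₀ x) - deriv (deriv T₀) (y₀ x) * Tdot (y₀ x) / deriv T₀ (y₀ x))
          / deriv T₀ (y₀ x) ^ 2) x := by
  have hy₀' := hasDerivAt_of_rightInverse (hT₀ (y₀ x)) (hy₀ x) hT₀y₀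
  have hy' := hasDerivAt_of_rightInverse (hT (y x)) (hy x) hTy
  have hnum := ((hTdot (y₀ x)).hasDerivAt.comp x hy₀').const_mul δ
  have hden := (hT₀' (y₀ x)).hasDerivAt.comp x hy₀'
  refine (hy'.sub (hy₀'.sub (hnum.div hden hp))).congr_deriv ?_
  simp only [comp_apply]
  field_simp
  ring

theorem exists_inverse_expansion_bound_of_abs_le {T₀ Tdot : ℝ → ℝ} {K₀ K₁ K₂ M₂ M₃ CE : ℝ}
    (hT₀ : ContDiff ℝ 3 T₀) (hexp : ∀ t, 1 ≤ deriv T₀ t) (hTdot : ContDiff ℝ 2 Tdot)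
    (hK₀ : ∀ t, |Tdot t| ≤ K₀) (hK₁ : ∀ t, |deriv Tdot t| ≤ K₁)
    (hK₂ : ∀ t, |deriv (deriv Tdot) t| ≤ K₂) (hM₂ : ∀ t, |deriv (deriv T₀) t| ≤ M₂)
    (hM₃ : ∀ t, |deriv (deriv (deriv T₀)) t| ≤ M₃) (hCE : 0 ≤ CE) (δbar : ℝ) :
    ∃ C, ∀ δ ∈ Icc 0 δbar, ∀ T : ℝ → ℝ,
      (∀ t, |T t - T₀ t - δ * Tdot t| ≤ CE * δ ^ 2) →
      (∀ t, |deriv T t - deriv T₀ t - δ * deriv Tdot t| ≤ CE * δ ^ 2) →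
      ∀ a b, T b = T₀ a → 1 ≤ deriv T b →
        |b - (a - δ * Tdot a / deriv T₀ a)| ≤ C * δ ^ 2 ∧
        |(deriv T b)⁻¹ - (deriv T₀ a)⁻¹
          + δ * (deriv Tdot a - deriv (deriv T₀) a * Tdot a / deriv T₀ a) / deriv T₀ a ^ 2|
          ≤ C * δ ^ 2 := by
  have hT₀' := hT₀.deriv' (n := 2)
  have hT₀d : Differentiable ℝ T₀ := hT₀.differentiable (by norm_num)
  have hT₀'d : Differentiable ℝ (deriv T₀) := hT₀'.differentiable (by norm_num)
  have hT₀''d : Differentiable ℝ (deriv (deriv T₀)) :=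
    (hT₀'.deriv' (n := 1)).differentiable (by norm_num)
  have hTdotd : Differentiable ℝ Tdot := hTdot.differentiable (by norm_num)
  have hTdot'd : Differentiable ℝ (deriv Tdot) :=
    (hTdot.deriv' (n := 1)).differentiable (by norm_num)
  obtain ⟨hK₀0, hK₁0, hK₂0, hM₂0, hM₃0⟩ : 0 ≤ K₀ ∧ 0 ≤ K₁ ∧ 0 ≤ K₂ ∧ 0 ≤ M₂ ∧ 0 ≤ M₃ :=
    ⟨(abs_nonneg _).trans (hK₀ 0), (abs_nonneg _).trans (hK₁ 0), (abs_nonneg _).trans (hK₂ 0),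
      (abs_nonneg _).trans (hM₂ 0), (abs_nonneg _).trans (hM₃ 0)⟩
  set C₁ := K₀ + CE * δbar
  set C₀ := M₂ * C₁ ^ 2 + K₁ * C₁ + CE
  set C₂ := M₂ * C₁ + K₁ + CE * δbar
  set C₃ := M₃ * C₁ ^ 2 + M₂ * C₀ + K₂ * C₁ + CE
  refine ⟨C₀ + C₂ ^ 2 + C₃, fun δ ⟨hδ, hδb⟩ T hE hE' a b hab hq => ?_⟩
  have hδbar : 0 ≤ δbar := hδ.trans hδb
  have hCEδ : CE * δ ^ 2 ≤ CE * δbar * δ := by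
    rw [mul_assoc, sq]; exact mul_le_mul_of_nonneg_left (by gcongr) hCE
  have hC₀ : 0 ≤ C₀ := by positivity
  have hρ : |b - a| ≤ C₁ * δ :=
    (abs_sub_le_of_apply_eq hT₀d hexp hK₀ hE hδ hab).trans (by linarith)
  have hρsq : (b - a) ^ 2 ≤ C₁ ^ 2 * δ ^ 2 := by
    rw [← sq_abs, ← mul_pow]; exact pow_le_pow_left₀ (abs_nonneg _) hρ 2
  have hσ : |b - (a - δ * Tdot a / deriv T₀ a)| ≤ C₀ * δ ^ 2 :=
    (abs_sub_sub_div_le_of_apply_eq hT₀d hT₀'d hexp hM₂ hTdotd hK₁ hE hδ hab).trans (by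
      have := mul_le_mul_of_nonneg_left hρsq hM₂0
      have := mul_le_mul_of_nonneg_left hρ (mul_nonneg hδ hK₁0)
      nlinarith)
  have hqp : |deriv T b - deriv T₀ a| ≤ C₂ * δ :=
    (abs_deriv_sub_deriv_le hT₀'d hM₂ hK₁ hE' hδ).trans (by
      have := mul_le_mul_of_nonneg_left hρ hM₂0
      nlinarith)
  have hqpg := (abs_deriv_sub_deriv_sub_le (a := a) (b := b) hT₀'d hT₀''d hM₂ hM₃ hTdot'd hK₂
    hE' hδ).trans (by
      have := mul_le_mul_of_nonneg_left hρsq hM₃0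
      have := mul_le_mul_of_nonneg_left hσ hM₂0
      have := mul_le_mul_of_nonneg_left hρ (mul_nonneg hδ hK₂0)
      show _ ≤ C₃ * δ ^ 2
      nlinarith)
  have hqpsq : (deriv T b - deriv T₀ a) ^ 2 ≤ C₂ ^ 2 * δ ^ 2 := by
    rw [← sq_abs, ← mul_pow]; exact pow_le_pow_left₀ (abs_nonneg _) hqp 2
  have hC₃ : 0 ≤ C₃ * δ ^ 2 := (abs_nonneg _).trans hqpg
  refine ⟨hσ.trans ?_, (abs_inv_sub_inv_add_div_sq_le (hexp a) hq).trans ?_⟩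
  · nlinarith [sq_nonneg (C₂ * δ)]
  · nlinarith [sq_nonneg (C₀ * δ)]

theorem exists_inverse_expansion_bound {T₀ Tdot : ℝ → ℝ} {CE : ℝ} (hT₀ : ContDiff ℝ 3 T₀)
    (hT₀per : Periodic (deriv T₀) 1) (hexp : ∀ t, 1 ≤ deriv T₀ t) (hTdot : ContDiff ℝ 2 Tdot)
    (hTdotper : Periodic Tdot 1) (hCE : 0 ≤ CE) (δbar : ℝ) :
    ∃ C, ∀ δ ∈ Icc 0 δbar, ∀ T : ℝ → ℝ,
      (∀ t, |T t - T₀ t - δ * Tdot t| ≤ CE * δ ^ 2) →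
      (∀ t, |deriv T t - deriv T₀ t - δ * deriv Tdot t| ≤ CE * δ ^ 2) →
      ∀ a b, T b = T₀ a → 1 ≤ deriv T b →
        |b - (a - δ * Tdot a / deriv T₀ a)| ≤ C * δ ^ 2 ∧
        |(deriv T b)⁻¹ - (deriv T₀ a)⁻¹
          + δ * (deriv Tdot a - deriv (deriv T₀) a * Tdot a / deriv T₀ a) / deriv T₀ a ^ 2|
          ≤ C * δ ^ 2 := by
  have hT₀' := hT₀.deriv' (n := 2)
  obtain ⟨K₀, hK₀⟩ := hTdotper.exists_abs_iterate_deriv_le one_ne_zero hTdot (k := 0) (by simp)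
  obtain ⟨K₁, hK₁⟩ := hTdotper.exists_abs_iterate_deriv_le one_ne_zero hTdot (k := 1) (by simp)
  obtain ⟨K₂, hK₂⟩ := hTdotper.exists_abs_iterate_deriv_le one_ne_zero hTdot (k := 2) (by simp)
  obtain ⟨M₂, hM₂⟩ := hT₀per.exists_abs_iterate_deriv_le one_ne_zero hT₀' (k := 1) (by simp)
  obtain ⟨M₃, hM₃⟩ := hT₀per.exists_abs_iterate_deriv_le one_ne_zero hT₀' (k := 2) (by simp)
  exact exists_inverse_expansion_bound_of_abs_le hT₀ hexp hTdot hK₀ hK₁ hK₂ hM₂ hM₃ hCE δbar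

theorem abs_remainder_le_of_CnormIcc_le {T₀ T Tdot : ℝ → ℝ} {d δ B : ℝ} {k : ℕ} (hk : 1 ≤ k)
    (hT₀ : ContDiff ℝ 1 T₀) (hT : ContDiff ℝ 1 T) (hTdot : ContDiff ℝ 1 Tdot)
    (hT₀per : ∀ x, T₀ (x + 1) = T₀ x + d) (hTper : ∀ x, T (x + 1) = T x + d)
    (hTdotper : Periodic Tdot 1) (hB : CnormIcc k (fun x => T x - T₀ x - δ * Tdot x) ≤ B) :
    (∀ t, |T t - T₀ t - δ * Tdot t| ≤ B) ∧
      ∀ t, |deriv T t - deriv T₀ t - δ * deriv Tdot t| ≤ B := by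
  have hper : Periodic (fun x => T x - T₀ x - δ * Tdot x) 1 := fun x => by
    simp only [hTper, hT₀per, hTdotper x]; ring
  have hR : ContDiff ℝ 1 (fun x => T x - T₀ x - δ * Tdot x) := by fun_prop
  refine ⟨fun t => ?_, fun t => ?_⟩
  · simpa using
      (abs_iteratedDeriv_le_CnormIcc (hR.of_le zero_le_one) hper (Nat.zero_le _) t).trans hB
  · have hderiv : deriv (fun x => T x - T₀ x - δ * Tdot x) t
        = deriv T t - deriv T₀ t - δ * deriv Tdot t := by
      have hT' := (hT.differentiable one_ne_zero t).hasDerivAt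
      have hT₀' := (hT₀.differentiable one_ne_zero t).hasDerivAt
      have hTdot' := (hTdot.differentiable one_ne_zero t).hasDerivAt
      exact ((hT'.sub hT₀').sub (hTdot'.const_mul δ)).deriv
    rw [← hderiv, ← iteratedDeriv_one]
    exact (abs_iteratedDeriv_le_CnormIcc hR hper hk t).trans hB

theorem inverse_branch_expansion_general
    (δbar N : ℝ) (hδbar : 0 < δbar) (hN : 1 < N) (d : ℕ)
    (Tf : ℝ → ℝ → ℝ) (Tdot : ℝ → ℝ)
    (hTdot : ContDiff ℝ 3 Tdot) (hTdotper : Function.Periodic Tdot 1)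
    (hreg : ∀ δ ∈ Set.Ico (0:ℝ) δbar,
      ContDiff ℝ 3 (Tf δ) ∧ (∀ x, Tf δ (x + 1) = Tf δ x + d) ∧ ∀ x, N ≤ deriv (Tf δ) x)
    (CE : ℝ)
    (hE : ∀ δ ∈ Set.Ioo (0:ℝ) δbar,
      CnormIcc 3 (fun x => Tf δ x - Tf 0 x - δ * Tdot x) ≤ CE * δ ^ 2)
    (y : ℝ → ℝ → ℝ)
    (hy : ∀ δ ∈ Set.Ico (0:ℝ) δbar, ∀ x, Tf δ (y δ x) = x)
    (hyC1 : ∀ δ ∈ Set.Ico (0:ℝ) δbar, ContDiff ℝ 1 (y δ)) :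
    ∃ Cc : ℝ, ∀ δ ∈ Set.Ioo (0:ℝ) δbar,
      CnormIcc 1 (fun x => y δ x - (y 0 x - δ * Tdot (y 0 x) / deriv (Tf 0) (y 0 x)))
        ≤ Cc * δ ^ 2 := by
  have h0 : (0:ℝ) ∈ Ico 0 δbar := ⟨le_rfl, hδbar⟩
  obtain ⟨hT₀, hT₀per, -⟩ := hreg 0 h0
  have hexp : ∀ δ ∈ Ico 0 δbar, ∀ t, 1 ≤ deriv (Tf δ) t :=
    fun δ hδ t => hN.le.trans ((hreg δ hδ).2.2 t)
  have hCE : 0 ≤ CE := nonneg_of_mul_nonneg_left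
    ((CnormIcc_nonneg _ _).trans (hE (δbar / 2) ⟨by positivity, by linarith⟩)) (by positivity)
  obtain ⟨C, hC⟩ := exists_inverse_expansion_bound hT₀ (periodic_deriv_of_map_add_eq hT₀per)
    (hexp 0 h0) (hTdot.of_le (by norm_num)) hTdotper hCE δbar
  refine ⟨C + C, fun δ hδ => ?_⟩
  have hδ' : δ ∈ Ico 0 δbar := Ioo_subset_Ico_self hδ
  obtain ⟨hT, hTper, -⟩ := hreg δ hδ'
  obtain ⟨hR, hR'⟩ := abs_remainder_le_of_CnormIcc_le (by norm_num) (hT₀.of_le (by norm_num))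
    (hT.of_le (by norm_num)) (hTdot.of_le (by norm_num)) hT₀per hTper hTdotper (hE δ hδ)
  have hbound x := hC δ (Ioo_subset_Icc_self hδ) (Tf δ) hR hR' (y 0 x) (y δ x)
    ((hy δ hδ' x).trans (hy 0 h0 x).symm) (hexp δ hδ' _)
  refine (CnormIcc_one_le (fun x _ => (hbound x).1) (fun x _ => ?_)).trans (add_mul C C _).symm.le
  rw [(hasDerivAt_inverse_sub_expansion (hT₀.differentiable (by norm_num))
    ((hT₀.deriv' (n := 2)).differentiable (by norm_num)) (hT.differentiable (by norm_num))
    (hTdot.differentiable (by norm_num)) ((hyC1 0 h0).differentiable one_ne_zero)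
    ((hyC1 δ hδ').differentiable one_ne_zero) (hy 0 h0) (hy δ hδ')
    (by linarith [hexp 0 h0 (y 0 x)])).deriv]
  exact (hbound x).2

/-- First-order expansion of inverse branches: if `T_δ = T₀ + δ Ṫ + O_{C³}(δ²)` is a
family of `C³` expanding circle maps and `y δ` is a (continuously chosen) inverse
branch of `T_δ`, then `y δ = y 0 - δ Ṫ(y 0)/T₀'(y 0) + O_{C¹}(δ²)`, i.e. the error
is bounded in `C¹` norm by a constant times `δ²`, uniformly in `δ ∈ (0, δ̄)`. -/
theorem inverse_branch_expansion
    (δbar N : ℝ) (hδbar : 0 < δbar) (hN : 1 < N) (d : ℕ) (hd : 0 < d)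
    (Tf : ℝ → ℝ → ℝ) (Tdot : ℝ → ℝ)
    (hTdot : ContDiff ℝ 3 Tdot) (hTdotper : Function.Periodic Tdot 1)
    (hreg : ∀ δ ∈ Set.Ico (0:ℝ) δbar,
      ContDiff ℝ 3 (Tf δ) ∧ (∀ x, Tf δ (x + 1) = Tf δ x + d) ∧ ∀ x, N ≤ deriv (Tf δ) x)
    (CE : ℝ)
    (hE : ∀ δ ∈ Set.Ioo (0:ℝ) δbar,
      CnormIcc 3 (fun x => Tf δ x - Tf 0 x - δ * Tdot x) ≤ CE * δ ^ 2)
    (y : ℝ → ℝ → ℝ)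
    (hy : ∀ δ ∈ Set.Ico (0:ℝ) δbar, ∀ x, Tf δ (y δ x) = x)
    (hyC1 : ∀ δ ∈ Set.Ico (0:ℝ) δbar, ContDiff ℝ 1 (y δ))
    (hycont : ∀ x, ContinuousOn (fun δ => y δ x) (Set.Ico 0 δbar)) :
    ∃ Cc : ℝ, ∀ δ ∈ Set.Ioo (0:ℝ) δbar,
      CnormIcc 1 (fun x => y δ x - (y 0 x - δ * Tdot (y 0 x) / deriv (Tf 0) (y 0 x)))
        ≤ Cc * δ ^ 2 :=
  inverse_branch_expansion_general δbar N hδbar hN d Tf Tdot hTdot hTdotper hreg CE hE y hy hyC1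
end
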